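/- arXiv:2604.06936 — 4 statements merged into one kernel-verified Lean document; each statement's English description precedes it below -/
import Mathlib

section
/- Let ξ̂_1, ξ̂_2, … be i.i.d. Ξ-valued random variables with distribution P^c ∈ Δ_J, and let P̂_N and r̂_N be the Bayesian center and radii constructed from the first N samples. Then the Bayesian box ambiguity set converges to the singleton {P^c} in Hausdorff distance: H(𝔓(P̂_N, r̂_N), 𝔓(P^c, 0); ‖·‖_∞) → 0 almost surely as N → ∞. -/
/-! The box around `P` with radii `r ≥ 0` contains `P` and lies within `r` of it, so its Hausdorff
distance to `{Pc}` is at most `‖P - Pc‖∞ + ‖r‖∞`. By the strong law of large numbers for the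
indicators of `{ξ̂ᵢ = ξʲ}`, the empirical frequencies converge a.s. to `Pc`; the Bayesian center
differs from them only by prior terms of order `1/N`, and the radii are `O(1/√N)`. -/

open Filter Topology MeasureTheory ProbabilityTheory

noncomputable section

/-- Number of observations among the first `N` samples equal to the `j`-th support point. -/
def sampleCount {Ω : Type*} {J : ℕ} (X : ℕ → Ω → Fin J) (j : Fin J) (N : ℕ) (ω : Ω) : ℕ :=
  ((Finset.range N).filter (fun i => X i ω = j)).card

/-- Bayesian reference probability `p̂_{j,N} = (τ_{j,0} - 1 + Σ_{i<N} 1{ξ̂_i = ξ^j}) / (Σ_k τ_{k,0} - J + N)`. -/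
def bayesCenter {Ω : Type*} {J : ℕ} (τ0 : Fin J → ℝ) (X : ℕ → Ω → Fin J)
    (N : ℕ) (ω : Ω) (j : Fin J) : ℝ :=
  (τ0 j - 1 + (sampleCount X j N ω : ℝ)) / (∑ k, τ0 k - J + N)

/-- Bayesian radius `r̂_{j,N} = z · sqrt( p̂_{j,N}(1 - p̂_{j,N}) / (Σ_k τ_{k,N} - J) )`. -/
def bayesRadius {Ω : Type*} {J : ℕ} (τ0 : Fin J → ℝ) (z : ℝ) (X : ℕ → Ω → Fin J)
    (N : ℕ) (ω : Ω) (j : Fin J) : ℝ :=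
  z * Real.sqrt (bayesCenter τ0 X N ω j * (1 - bayesCenter τ0 X N ω j) / (∑ k, τ0 k - J + N))

/-- Box-type ambiguity set `𝔓(P,r) = {Q ∈ Δ_J : P_j - r_j ≤ Q_j ≤ P_j + r_j ∀ j}`. -/
def boxSet (J : ℕ) (P r : Fin J → ℝ) : Set (Fin J → ℝ) :=
  {Q | Q ∈ stdSimplex ℝ (Fin J) ∧ ∀ j, P j - r j ≤ Q j ∧ Q j ≤ P j + r j}

lemma boxSet_zero {J : ℕ} {P : Fin J → ℝ} (hP : P ∈ stdSimplex ℝ (Fin J)) :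
    boxSet J P (fun _ => 0) = {P} := by
  ext Q
  refine ⟨fun hQ => funext fun j => ?_, ?_⟩
  · exact le_antisymm (by simpa using (hQ.2 j).2) (by simpa using (hQ.2 j).1)
  · rintro rfl
    exact ⟨hP, fun j => by simp⟩

lemma hausdorffDist_boxSet_singleton_le {J : ℕ} {P r : Fin J → ℝ}
    (hP : P ∈ stdSimplex ℝ (Fin J)) (hr : 0 ≤ r) (P' : Fin J → ℝ) :
    Metric.hausdorffDist (boxSet J P r) {P'} ≤ dist P P' + ‖r‖ := by
  have hbound : 0 ≤ dist P P' + ‖r‖ := by positivity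
  refine Metric.hausdorffDist_le_of_mem_dist hbound (fun Q hQ => ⟨P', rfl, ?_⟩) ?_
  · refine (dist_pi_le_iff hbound).2 fun j => ?_
    have hQP : dist (Q j) (P j) ≤ ‖r‖ := by
      rw [Real.dist_eq, abs_sub_le_iff]
      have hrj : r j ≤ ‖r‖ := (le_abs_self _).trans (norm_le_pi_norm r j)
      constructor <;> linarith [hQ.2 j]
    calc dist (Q j) (P' j) ≤ dist (Q j) (P j) + dist (P j) (P' j) := dist_triangle _ _ _
      _ ≤ ‖r‖ + dist P P' := add_le_add hQP (dist_le_pi_dist P P' j)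
      _ = dist P P' + ‖r‖ := add_comm _ _
  · rintro _ rfl
    refine ⟨P, ⟨hP, fun j => ?_⟩, ?_⟩
    · have hrj : 0 ≤ r j := hr j
      constructor <;> linarith
    · rw [dist_comm]
      exact le_add_of_nonneg_right (norm_nonneg r)

section Bayes

variable {Ω : Type*} {J : ℕ}

lemma sum_sampleCount (X : ℕ → Ω → Fin J) (N : ℕ) (ω : Ω) :
    ∑ j, sampleCount X j N ω = N := by
  simpa [sampleCount] using
    (Finset.card_eq_sum_card_fiberwise (s := Finset.range N) (t := Finset.univ)
      (f := fun i => X i ω) (fun i _ => Finset.mem_univ _)).symm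

lemma bayesCenter_mem_stdSimplex {τ0 : Fin J → ℝ} (hτ0 : ∀ j, 1 ≤ τ0 j)
    (X : ℕ → Ω → Fin J) {N : ℕ} (hN : 0 < N) (ω : Ω) :
    bayesCenter τ0 X N ω ∈ stdSimplex ℝ (Fin J) := by
  have hprior : ∑ k, τ0 k - J = ∑ k, (τ0 k - 1) := by simp [Finset.sum_sub_distrib]
  have hden : (0 : ℝ) < ∑ k, τ0 k - J + N := by
    rw [hprior]
    have := Finset.sum_nonneg fun k (_ : k ∈ Finset.univ) => sub_nonneg.2 (hτ0 k)
    have : (0 : ℝ) < N := Nat.cast_pos.2 hN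
    linarith
  refine ⟨fun j => div_nonneg ?_ hden.le, ?_⟩
  · linarith [hτ0 j, (sampleCount X j N ω).cast_nonneg (α := ℝ)]
  · simp only [bayesCenter]
    rw [← Finset.sum_div, div_eq_one_iff_eq hden.ne', Finset.sum_add_distrib,
      ← hprior, ← Nat.cast_sum, sum_sampleCount]

lemma bayesRadius_nonneg (τ0 : Fin J → ℝ) {z : ℝ} (hz : 0 ≤ z) (X : ℕ → Ω → Fin J)
    (N : ℕ) (ω : Ω) : 0 ≤ bayesRadius τ0 z X N ω :=
  fun _ => mul_nonneg hz (Real.sqrt_nonneg _)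

lemma tendsto_bayesCenter (τ0 : Fin J → ℝ) {X : ℕ → Ω → Fin J} {ω : Ω} {j : Fin J} {p : ℝ}
    (h : Tendsto (fun N : ℕ => (sampleCount X j N ω : ℝ) / N) atTop (𝓝 p)) :
    Tendsto (fun N => bayesCenter τ0 X N ω j) atTop (𝓝 p) := by
  have hnum := (tendsto_const_div_atTop_nhds_zero_nat (τ0 j - 1)).add h
  have hden := (tendsto_const_div_atTop_nhds_zero_nat (∑ k, τ0 k - J)).add_const 1
  rw [zero_add] at hnum hden
  have hlim := hnum.div hden one_ne_zero
  rw [div_one] at hlim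
  refine hlim.congr' ?_
  filter_upwards [eventually_gt_atTop 0] with N hN
  have : (N : ℝ) ≠ 0 := Nat.cast_ne_zero.2 hN.ne'
  simp only [Pi.div_apply, bayesCenter]
  field_simp

lemma tendsto_bayesRadius_zero (τ0 : Fin J → ℝ) (z : ℝ) {X : ℕ → Ω → Fin J} {ω : Ω}
    {j : Fin J} {p : ℝ} (h : Tendsto (fun N => bayesCenter τ0 X N ω j) atTop (𝓝 p)) :
    Tendsto (fun N => bayesRadius τ0 z X N ω j) atTop (𝓝 0) := by
  have hden : Tendsto (fun N : ℕ => ∑ k, τ0 k - J + N) atTop atTop :=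
    tendsto_atTop_add_const_left _ _ tendsto_natCast_atTop_atTop
  have hvar := (h.mul (h.const_sub 1)).div_atTop hden
  simpa [bayesRadius] using hvar.sqrt.const_mul z

end Bayes

lemma identDistrib_of_measure_preimage_singleton {Ω Ω' α : Type*} [MeasurableSpace Ω]
    [MeasurableSpace Ω'] [MeasurableSpace α] [Countable α] [MeasurableSingletonClass α]
    {μ : Measure Ω} {ν : Measure Ω'} {X : Ω → α} {Y : Ω' → α}
    (hX : Measurable X) (hY : Measurable Y) (h : ∀ a, μ (X ⁻¹' {a}) = ν (Y ⁻¹' {a})) :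
    IdentDistrib X Y μ ν where
  aemeasurable_fst := hX.aemeasurable
  aemeasurable_snd := hY.aemeasurable
  map_eq := Measure.ext_of_singleton fun a => by
    rw [Measure.map_apply hX (measurableSet_singleton a),
      Measure.map_apply hY (measurableSet_singleton a), h]

theorem tendsto_sampleCount_div_ae {Ω : Type*} [MeasurableSpace Ω] {μ : Measure Ω}
    [IsFiniteMeasure μ] {J : ℕ} {X : ℕ → Ω → Fin J} (hmeas : ∀ i, Measurable (X i))
    (hindep : Pairwise (Function.onFun (· ⟂ᵢ[μ] ·) X))
    (hident : ∀ i, IdentDistrib (X i) (X 0) μ μ) :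
    ∀ᵐ ω ∂μ, ∀ j, Tendsto (fun N : ℕ => (sampleCount X j N ω : ℝ) / N) atTop
      (𝓝 (μ.real {ω | X 0 ω = j})) := by
  rw [ae_all_iff]
  intro j
  let isJ : Fin J → ℝ := fun a => if a = j then 1 else 0
  have hind : Measurable isJ := measurable_of_countable _
  have hint : Integrable (isJ ∘ X 0) μ :=
    (integrable_const (1 : ℝ)).mono' (hind.comp (hmeas 0)).aestronglyMeasurable
      (ae_of_all _ fun ω => by simp only [Function.comp, isJ]; split_ifs <;> simp)
  have hmean : μ[isJ ∘ X 0] = μ.real {ω | X 0 ω = j} := by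
    have hs : MeasurableSet {ω | X 0 ω = j} := hmeas 0 (measurableSet_singleton j)
    have : isJ ∘ X 0 = {ω | X 0 ω = j}.indicator 1 := by
      ext ω; simp [isJ, Set.indicator_apply]
    rw [this, integral_indicator_one hs]
  have := strong_law_ae_real (fun i => isJ ∘ X i) hint
    (fun i i' hii' => (hindep hii').comp hind hind) (fun i => (hident i).comp hind)
  filter_upwards [this] with ω hω
  rw [← hmean]
  convert hω using 3 with N
  simp [isJ, sampleCount, Finset.sum_boole]

theorem bayes_boxSet_hausdorff_tendsto_ae_general
    {Ω : Type*} [MeasurableSpace Ω] (μ : Measure Ω) [IsProbabilityMeasure μ]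
    (J : ℕ)
    (Pc : Fin J → ℝ) (hPc : Pc ∈ stdSimplex ℝ (Fin J))
    (X : ℕ → Ω → Fin J) (hmeas : ∀ i, Measurable (X i))
    (hindep : iIndepFun X μ)
    (hident : ∀ i j, μ {ω | X i ω = j} = ENNReal.ofReal (Pc j))
    (τ0 : Fin J → ℝ) (hτ0 : ∀ j, 1 < τ0 j)
    (z : ℝ) (hz : 0 < z) :
    ∀ᵐ ω ∂μ,
      Tendsto
        (fun N =>
          Metric.hausdorffDist
            (boxSet J (bayesCenter τ0 X N ω) (bayesRadius τ0 z X N ω))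
            (boxSet J Pc (fun _ => 0)))
        atTop (𝓝 0) := by
  have hid (i : ℕ) : IdentDistrib (X i) (X 0) μ μ :=
    identDistrib_of_measure_preimage_singleton (hmeas i) (hmeas 0) fun a =>
      (hident i a).trans (hident 0 a).symm
  have hmean (j : Fin J) : μ.real {ω | X 0 ω = j} = Pc j := by
    rw [measureReal_def, hident, ENNReal.toReal_ofReal (hPc.1 j)]
  filter_upwards [tendsto_sampleCount_div_ae hmeas (fun i i' h => hindep.indepFun h) hid]
    with ω hfreq
  have hcenter : Tendsto (fun N => bayesCenter τ0 X N ω) atTop (𝓝 Pc) :=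
    tendsto_pi_nhds.2 fun j => tendsto_bayesCenter τ0 (hmean j ▸ hfreq j)
  have hradius : Tendsto (fun N => bayesRadius τ0 z X N ω) atTop (𝓝 0) :=
    tendsto_pi_nhds.2 fun j => tendsto_bayesRadius_zero τ0 z (tendsto_pi_nhds.1 hcenter j)
  have hbound : ∀ᶠ N in atTop, Metric.hausdorffDist
      (boxSet J (bayesCenter τ0 X N ω) (bayesRadius τ0 z X N ω)) {Pc} ≤
        dist (bayesCenter τ0 X N ω) Pc + ‖bayesRadius τ0 z X N ω‖ := by
    filter_upwards [eventually_gt_atTop 0] with N hN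
    exact hausdorffDist_boxSet_singleton_le
      (bayesCenter_mem_stdSimplex (fun j => (hτ0 j).le) X hN ω)
      (bayesRadius_nonneg τ0 hz.le X N ω) Pc
  rw [boxSet_zero hPc]
  refine squeeze_zero' (.of_forall fun _ => Metric.hausdorffDist_nonneg) hbound ?_
  simpa using (tendsto_iff_dist_tendsto_zero.1 hcenter).add hradius.norm

/-- the Bayesian box ambiguity set converges almost surely to the
singleton `𝔓(P^c, 0) = {P^c}` in the Hausdorff distance for the ℓ∞ metric
(which is the default metric on `Fin J → ℝ`). -/
theorem bayes_boxSet_hausdorff_tendsto_ae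
    {Ω : Type*} [MeasurableSpace Ω] (μ : Measure Ω) [IsProbabilityMeasure μ]
    (J k : ℕ) (hJ : 2 ≤ J)
    (ξ : Fin J → Fin k → ℝ) (hξ : Function.Injective ξ)
    (Pc : Fin J → ℝ) (hPc : Pc ∈ stdSimplex ℝ (Fin J))
    (X : ℕ → Ω → Fin J) (hmeas : ∀ i, Measurable (X i))
    (hindep : iIndepFun X μ)
    (hident : ∀ i j, μ {ω | X i ω = j} = ENNReal.ofReal (Pc j))
    (τ0 : Fin J → ℝ) (hτ0 : ∀ j, 1 < τ0 j)
    (z : ℝ) (hz : 0 < z) :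
    ∀ᵐ ω ∂μ,
      Tendsto
        (fun N =>
          Metric.hausdorffDist
            (boxSet J (bayesCenter τ0 X N ω) (bayesRadius τ0 z X N ω))
            (boxSet J Pc (fun _ => 0)))
        atTop (𝓝 0) :=
  bayes_boxSet_hausdorff_tendsto_ae_general μ J Pc hPc X hmeas hindep hident τ0 hτ0 z hz

end
end

section
/- Let P̂ ∈ Δ_J and r ∈ ℝ_+^J, and set p̂_j^l := max(0, p̂_j − r_j), p̂_j^u := min(1, p̂_j + r_j), L := Σ_{k=1}^J p̂_k^l and U := Σ_{k=1}^J p̂_k^u. Assume L ∈ (0,1), U > 1, and that the ambiguity set 𝔓 := {Q ∈ Δ_J : p̂_j^l ≤ q_j ≤ p̂_j^u for all j} is nonempty. Define the probability vectors P^l with p_j^l := p̂_j^l / L and P^{u−l} with p_j^{u−l} := (p̂_j^u − p̂_j^l)/(U − L). Then for every function h : Ξ → ℝ, sup_{Q ∈ 𝔓} E_Q[h] = L · E_{P^l}[h] + (1 − L) · CVaR_{P^{u−l}}^{(U−1)/(U−L)}[h]. -/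
open Filter Topology

noncomputable section

/-- Expectation of `h` under the probability vector `Q`. -/
def expec {J : ℕ} (Q h : Fin J → ℝ) : ℝ := ∑ j, Q j * h j

/-- Conditional Value-at-Risk at level `υ` of `h` under probability vector `Q`:
`CVaR_Q^υ[h] = inf_{t ∈ ℝ} { t + (1-υ)⁻¹ Σ_j q_j max(h_j - t, 0) }`. -/
def cvar {J : ℕ} (Q : Fin J → ℝ) (υ : ℝ) (h : Fin J → ℝ) : ℝ :=
  ⨅ t : ℝ, (t + (1 - υ)⁻¹ * ∑ j, Q j * max (h j - t) 0)

/-!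
Writing `Q = p̂ˡ + s`, the worst case is a fractional knapsack: maximise `∑ sⱼ hⱼ` subject to
`0 ≤ sⱼ ≤ p̂ᵘⱼ - p̂ˡⱼ` and `∑ sⱼ = 1 - L`. Its LP dual is
`min_t (1 - L) t + ∑ⱼ (p̂ᵘⱼ - p̂ˡⱼ) (hⱼ - t)⁺`, which after division by `1 - L` is the
Rockafellar–Uryasev formula for the CVaR of `P^{u-l}` at level `(U - 1) / (U - L)`. Strong duality
is witnessed by the greedy solution: fill `s` to capacity where `h > t` and partially where
`h = t`, for a threshold `t` at which the capacity above `t` crosses `1 - L`.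
-/

open Finset

section Knapsack

variable {ι : Type*} [Fintype ι]

/-- The dual objective of the fractional knapsack `max ∑ sⱼ hⱼ` s.t. `0 ≤ s ≤ c`, `∑ sⱼ = B`. -/
def knapsackDual (c h : ι → ℝ) (B t : ℝ) : ℝ := B * t + ∑ j, c j * max (h j - t) 0

theorem sum_mul_eq_mul_add_sum_mul_sub {s h : ι → ℝ} {B : ℝ} (hsum : ∑ j, s j = B) (t : ℝ) :
    ∑ j, s j * h j = B * t + ∑ j, s j * (h j - t) := by
  simp only [mul_sub, sum_sub_distrib, ← sum_mul, hsum]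
  ring

theorem sum_mul_le_knapsackDual {s c h : ι → ℝ} {B : ℝ} (hs0 : ∀ j, 0 ≤ s j)
    (hsc : ∀ j, s j ≤ c j) (hsum : ∑ j, s j = B) (t : ℝ) :
    ∑ j, s j * h j ≤ knapsackDual c h B t := by
  rw [sum_mul_eq_mul_add_sum_mul_sub hsum t, knapsackDual]
  refine (add_le_add_iff_left _).2 (sum_le_sum fun j _ => ?_)
  calc s j * (h j - t) ≤ s j * max (h j - t) 0 :=
        mul_le_mul_of_nonneg_left (le_max_left _ _) (hs0 j)
    _ ≤ c j * max (h j - t) 0 := mul_le_mul_of_nonneg_right (hsc j) (le_max_right _ _)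

theorem sum_mul_eq_knapsackDual_of_slack {s c h : ι → ℝ} {B t : ℝ} (hsum : ∑ j, s j = B)
    (hslack : ∀ j, s j * (h j - t) = c j * max (h j - t) 0) :
    ∑ j, s j * h j = knapsackDual c h B t := by
  simp only [sum_mul_eq_mul_add_sum_mul_sub hsum t, hslack, knapsackDual]

theorem exists_knapsack_threshold (c h : ι → ℝ) {B : ℝ} (hB : 0 ≤ B) (hBc : B ≤ ∑ j, c j) :
    ∃ t, ∑ j with t < h j, c j ≤ B ∧ B ≤ ∑ j with t ≤ h j, c j := by
  rcases isEmpty_or_nonempty ι with _ | _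
  · exact ⟨0, by simpa using hB, by simpa using hBc⟩
  obtain ⟨jmax, -, hjmax⟩ := univ.exists_max_image h univ_nonempty
  -- `t` is the least value of `h` with capacity at most `B` strictly above it; the capacity
  -- strictly above the next lower value of `h` is the capacity weakly above `t`, and exceeds `B`.
  set S : Finset ι := {j | ∑ i with h j < h i, c i ≤ B}
  have hS : S.Nonempty := ⟨jmax, by
    simpa [S, filter_eq_empty_iff.2 fun i _ => not_lt.2 (hjmax i (mem_univ i))] using hB⟩
  obtain ⟨j₀, hj₀S, hj₀min⟩ := S.exists_min_image h hS
  refine ⟨h j₀, (mem_filter.1 hj₀S).2, ?_⟩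
  by_contra! hlt
  obtain ⟨j, hj⟩ : ∃ j, h j < h j₀ := by
    by_contra! hall
    rw [filter_true_of_mem fun j _ => hall j] at hlt
    exact hlt.not_ge hBc
  obtain ⟨j₁, hj₁, hj₁max⟩ := ({j | h j < h j₀} : Finset ι).exists_max_image h ⟨j, by simpa⟩
  have hj₁lt : h j₁ < h j₀ := (mem_filter.1 hj₁).2
  have hgap : ∀ i, h j₁ < h i ↔ h j₀ ≤ h i := fun i =>
    ⟨fun hi => not_lt.1 fun hi' => (hj₁max i (by simpa using hi')).not_gt hi, hj₁lt.trans_le⟩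
  have hj₁S : j₁ ∈ S := by
    simp only [S, mem_filter, mem_univ, true_and, hgap]
    exact hlt.le
  exact (hj₀min j₁ hj₁S).not_gt hj₁lt

theorem exists_sum_mul_eq_knapsackDual {c : ι → ℝ} (h : ι → ℝ) (hc : ∀ j, 0 ≤ c j) {B : ℝ}
    (hB : 0 ≤ B) (hBc : B ≤ ∑ j, c j) :
    ∃ (s : ι → ℝ) (t : ℝ), (∀ j, 0 ≤ s j) ∧ (∀ j, s j ≤ c j) ∧ ∑ j, s j = B ∧
      ∑ j, s j * h j = knapsackDual c h B t := by
  obtain ⟨t, hA, hA'⟩ := exists_knapsack_threshold c h hB hBc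
  set A := ∑ j with t < h j, c j
  set A' := ∑ j with t ≤ h j, c j
  -- `ρ = 0` when `A' = A`, and then also `B = A`
  set ρ := (B - A) / (A' - A)
  have hρ0 : 0 ≤ ρ := div_nonneg (by linarith) (by linarith)
  have hρ1 : ρ ≤ 1 := div_le_one_of_le₀ (by linarith) (by linarith)
  have hρ : ρ * (A' - A) = B - A := by
    rcases eq_or_ne (A' - A) 0 with h0 | h0
    · rw [h0, mul_zero]; linarith
    · exact div_mul_cancel₀ _ h0
  set s : ι → ℝ := fun j =>
    (1 - ρ) * (if t < h j then c j else 0) + ρ * (if t ≤ h j then c j else 0)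
  have hsum : ∑ j, s j = B := by
    simp only [s, sum_add_distrib, ← mul_sum, ← sum_filter]
    linear_combination hρ
  refine ⟨s, t, fun j => ?_, fun j => ?_, hsum, sum_mul_eq_knapsackDual_of_slack hsum fun j => ?_⟩
  · have := hc j
    simp only [s]; split_ifs <;> nlinarith
  · have := hc j
    simp only [s]; split_ifs <;> nlinarith
  · simp only [s]
    rcases lt_trichotomy t (h j) with hlt | heq | hgt
    · simp only [if_pos hlt, if_pos hlt.le, max_eq_left (sub_nonneg.2 hlt.le)]; ring
    · simp [heq]
    · simp [hgt.not_gt, hgt.not_ge, max_eq_right (sub_nonpos.2 hgt.le)]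

theorem isGreatest_sum_mul_box {lo hi : ι → ℝ} (h : ι → ℝ)
    (hlo : ∀ j, 0 ≤ lo j) (hlohi : ∀ j, lo j ≤ hi j) (hL : ∑ j, lo j ≤ 1) (hU : 1 ≤ ∑ j, hi j) :
    ∃ t, IsGreatest ((fun Q => ∑ j, Q j * h j) ''
        {Q | Q ∈ stdSimplex ℝ ι ∧ ∀ j, lo j ≤ Q j ∧ Q j ≤ hi j})
        (∑ j, lo j * h j + knapsackDual (fun j => hi j - lo j) h (1 - ∑ j, lo j) t) ∧
      ∀ t', knapsackDual (fun j => hi j - lo j) h (1 - ∑ j, lo j) t ≤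
        knapsackDual (fun j => hi j - lo j) h (1 - ∑ j, lo j) t' := by
  have hsplit (Q : ι → ℝ) : ∑ j, Q j * h j = ∑ j, lo j * h j + ∑ j, (Q j - lo j) * h j := by
    simp only [sub_mul, sum_sub_distrib, add_sub_cancel]
  obtain ⟨s, t, hs0, hsc, hsum, hst⟩ := exists_sum_mul_eq_knapsackDual h
    (fun j => sub_nonneg.2 (hlohi j)) (sub_nonneg.2 hL) (by rw [sum_sub_distrib]; linarith)
  refine ⟨t, ⟨⟨fun j => lo j + s j, ⟨⟨fun j => add_nonneg (hlo j) (hs0 j), ?_⟩, fun j => ?_⟩, ?_⟩,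
    ?_⟩, fun t' => hst ▸ sum_mul_le_knapsackDual hs0 hsc hsum t'⟩
  · rw [sum_add_distrib, hsum, add_sub_cancel]
  · exact ⟨le_add_of_nonneg_right (hs0 j), by linarith [hsc j]⟩
  · simp only [add_mul, sum_add_distrib, hst]
  · rintro _ ⟨Q, ⟨⟨-, hQ1⟩, hQ⟩, rfl⟩
    change ∑ j, Q j * h j ≤ _
    rw [hsplit Q]
    refine (add_le_add_iff_left _).2 (sum_mul_le_knapsackDual (fun j => sub_nonneg.2 (hQ j).1)
      (fun j => sub_le_sub_right (hQ j).2 _) ?_ t)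
    rw [sum_sub_distrib, hQ1]

end Knapsack

theorem mul_expec_div {J : ℕ} (p h : Fin J → ℝ) {L : ℝ} (hL : L ≠ 0) :
    L * expec (fun j => p j / L) h = ∑ j, p j * h j := by
  simp only [expec, mul_sum, div_mul_eq_mul_div, mul_div_cancel₀ _ hL]

theorem cvar_div_eq_knapsackDual_div {J : ℕ} {c : Fin J → ℝ} (h : Fin J → ℝ) {S B t₀ : ℝ}
    (hS : 0 < S) (hB : 0 < B) (ht₀ : ∀ t, knapsackDual c h B t₀ ≤ knapsackDual c h B t) :
    cvar (fun j => c j / S) (1 - B / S) h = knapsackDual c h B t₀ / B := by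
  have hobj (t : ℝ) : t + (1 - (1 - B / S))⁻¹ * ∑ j, c j / S * max (h j - t) 0 =
      knapsackDual c h B t / B := by
    simp only [knapsackDual, sub_sub_cancel, ← sum_div, div_mul_eq_mul_div]
    field_simp
  simp only [cvar, hobj]
  refine IsLeast.csInf_eq ⟨⟨t₀, rfl⟩, ?_⟩
  rintro _ ⟨t, rfl⟩
  exact div_le_div_of_nonneg_right (ht₀ t) hB.le

theorem worstcase_eq_mean_cvar_general
    (J : ℕ)
    (Phat r : Fin J → ℝ)
    (L U : ℝ)
    (hLdef : L = ∑ k, max 0 (Phat k - r k))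
    (hUdef : U = ∑ k, min 1 (Phat k + r k))
    (hL0 : 0 < L) (hL1 : L < 1) (hU : 1 < U)
    (hne : ({Q | Q ∈ stdSimplex ℝ (Fin J) ∧
        ∀ j, max 0 (Phat j - r j) ≤ Q j ∧ Q j ≤ min 1 (Phat j + r j)} : Set (Fin J → ℝ)).Nonempty)
    (h : Fin J → ℝ) :
    sSup ((fun Q => expec Q h) ''
        {Q | Q ∈ stdSimplex ℝ (Fin J) ∧
          ∀ j, max 0 (Phat j - r j) ≤ Q j ∧ Q j ≤ min 1 (Phat j + r j)})
      = L * expec (fun j => max 0 (Phat j - r j) / L) h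
        + (1 - L) *
          cvar (fun j => (min 1 (Phat j + r j) - max 0 (Phat j - r j)) / (U - L))
            ((U - 1) / (U - L)) h := by
  obtain ⟨Q, -, hQ⟩ := hne
  obtain ⟨t, hmax, hmin⟩ := isGreatest_sum_mul_box h (fun j => le_max_left 0 _)
    (fun j => (hQ j).1.trans (hQ j).2) (by linarith) (by linarith)
  rw [← hLdef] at hmax hmin
  have hυ : (U - 1) / (U - L) = 1 - (1 - L) / (U - L) := by
    field_simp [(by linarith : U - L ≠ 0)]
    ring
  rw [show (fun Q => expec Q h) = fun Q => ∑ j, Q j * h j from rfl, hmax.csSup_eq,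
    mul_expec_div _ _ hL0.ne', hυ, cvar_div_eq_knapsackDual_div h (by linarith) (by linarith) hmin,
    mul_div_cancel₀ _ (by linarith : 1 - L ≠ 0)]

/-- mean–CVaR reformulation of the worst-case expectation over a
box ambiguity set with clipped bounds. -/
theorem worstcase_eq_mean_cvar
    (J : ℕ) (hJ : 2 ≤ J)
    (Phat r : Fin J → ℝ)
    (hPhat : Phat ∈ stdSimplex ℝ (Fin J)) (hr : ∀ j, 0 ≤ r j)
    (L U : ℝ)
    (hLdef : L = ∑ k, max 0 (Phat k - r k))
    (hUdef : U = ∑ k, min 1 (Phat k + r k))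
    (hL0 : 0 < L) (hL1 : L < 1) (hU : 1 < U)
    (hne : ({Q | Q ∈ stdSimplex ℝ (Fin J) ∧
        ∀ j, max 0 (Phat j - r j) ≤ Q j ∧ Q j ≤ min 1 (Phat j + r j)} : Set (Fin J → ℝ)).Nonempty)
    (h : Fin J → ℝ) :
    sSup ((fun Q => expec Q h) ''
        {Q | Q ∈ stdSimplex ℝ (Fin J) ∧
          ∀ j, max 0 (Phat j - r j) ≤ Q j ∧ Q j ≤ min 1 (Phat j + r j)})
      = L * expec (fun j => max 0 (Phat j - r j) / L) h
        + (1 - L) *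
          cvar (fun j => (min 1 (Phat j + r j) - max 0 (Phat j - r j)) / (U - L))
            ((U - 1) / (U - L)) h :=
  worstcase_eq_mean_cvar_general J Phat r L U hLdef hUdef hL0 hL1 hU hne h

end
end

section
/- Under the stochastic optimal control setup with weight function w, let P^c ∈ Δ_J, let 𝔓(P̂, r̂) be a nonempty box ambiguity set with center P̂ ∈ Δ_J and radii r̂ ∈ ℝ_+^J, and let V* and V̂* be the unique fixed points in 𝒱(S) of the true and robust Bellman operators L and L̂. Then ‖V̂* − V*‖_w ≤ (C̄_w / (1 − γ_w)^2) · ( ‖P̂ − P^c‖_1 + 2 Σ_{j=1}^J r̂_j ). -/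
open Filter Topology

noncomputable section

/-- Weighted sup norm `‖V‖_w = sup_{s ∈ S} |V s| / w s`. -/
noncomputable def wSupNorm {m : ℕ} (S : Set (Fin m → ℝ)) (w V : (Fin m → ℝ) → ℝ) : ℝ :=
  ⨆ s : S, |V (s : Fin m → ℝ)| / w (s : Fin m → ℝ)

/-- Distributionally robust Bellman operator. -/
noncomputable def robustBellman {J m n : ℕ} (A : Set (Fin n → ℝ)) (amb : Set (Fin J → ℝ))
    (C : (Fin m → ℝ) → (Fin n → ℝ) → Fin J → ℝ)
    (g : (Fin m → ℝ) → (Fin n → ℝ) → Fin J → Fin m → ℝ)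
    (γ : ℝ) (V : (Fin m → ℝ) → ℝ) (s : Fin m → ℝ) : ℝ :=
  ⨅ a : A, ⨆ Q : amb,
    expec (Q : Fin J → ℝ) (fun j => C s (a : Fin n → ℝ) j + γ * V (g s (a : Fin n → ℝ) j))

/-- True Bellman operator under the distribution `Pc`. -/
noncomputable def trueBellman {J m n : ℕ} (A : Set (Fin n → ℝ)) (Pc : Fin J → ℝ)
    (C : (Fin m → ℝ) → (Fin n → ℝ) → Fin J → ℝ)
    (g : (Fin m → ℝ) → (Fin n → ℝ) → Fin J → Fin m → ℝ)
    (γ : ℝ) (V : (Fin m → ℝ) → ℝ) (s : Fin m → ℝ) : ℝ :=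
  ⨅ a : A, expec Pc (fun j => C s (a : Fin n → ℝ) j + γ * V (g s (a : Fin n → ℝ) j))

/-- Policy-evaluation Bellman operator under the distribution `Pc`. -/
noncomputable def policyBellman {J m n : ℕ} (Pc : Fin J → ℝ)
    (C : (Fin m → ℝ) → (Fin n → ℝ) → Fin J → ℝ)
    (g : (Fin m → ℝ) → (Fin n → ℝ) → Fin J → Fin m → ℝ)
    (π : (Fin m → ℝ) → (Fin n → ℝ))
    (γ : ℝ) (V : (Fin m → ℝ) → ℝ) (s : Fin m → ℝ) : ℝ :=
  expec Pc (fun j => C s (π s) j + γ * V (g s (π s) j))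

/-! Both value functions are bounded by `K = C̄ / (1 - γ κ)` in the weighted norm: a fixed point
`V` of either operator satisfies `‖V‖_w ≤ C̄ + γ κ ‖V‖_w` (the true operator being the robust one
with the singleton ambiguity set `{P^c}`). At a state `s`, compare `L̂ V̂*` with `L V*` inside the
infimum over actions: changing `V̂*` to `V*` in the integrand costs `γ κ ‖V̂* - V*‖_w w(s)`, and
changing any `Q ∈ 𝔓(P̂, r̂)` to `P^c` costs `‖Q - P^c‖₁ K w(s) ≤ (‖P̂ - P^c‖₁ + Σ r̂) K w(s)`.
Hence `‖V̂* - V*‖_w ≤ γ κ ‖V̂* - V*‖_w + (‖P̂ - P^c‖₁ + Σ r̂) K`. -/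

section Order

variable {ι : Type*} {f g : ι → ℝ} {c δ : ℝ}

lemma bddAbove_range_of_abs_sub_le (h : ∀ i, |f i - c| ≤ δ) : BddAbove (Set.range f) :=
  ⟨c + δ, by rintro _ ⟨i, rfl⟩; linarith [(abs_le.1 (h i)).2]⟩

lemma bddBelow_range_of_abs_sub_le (h : ∀ i, |f i - c| ≤ δ) : BddBelow (Set.range f) :=
  ⟨c - δ, by rintro _ ⟨i, rfl⟩; linarith [(abs_le.1 (h i)).1]⟩

lemma abs_ciSup_sub_le [Nonempty ι] (h : ∀ i, |f i - c| ≤ δ) : |(⨆ i, f i) - c| ≤ δ := by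
  obtain ⟨i⟩ := ‹Nonempty ι›
  have hle : f i ≤ ⨆ i, f i := le_ciSup (bddAbove_range_of_abs_sub_le h) i
  have hge : (⨆ i, f i) ≤ c + δ := ciSup_le fun i => by linarith [(abs_le.1 (h i)).2]
  rw [abs_le]
  constructor <;> linarith [(abs_le.1 (h i)).1]

lemma abs_ciInf_sub_le [Nonempty ι] (h : ∀ i, |f i - c| ≤ δ) : |(⨅ i, f i) - c| ≤ δ := by
  obtain ⟨i⟩ := ‹Nonempty ι›
  have hle : (⨅ i, f i) ≤ f i := ciInf_le (bddBelow_range_of_abs_sub_le h) i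
  have hge : c - δ ≤ ⨅ i, f i := le_ciInf fun i => by linarith [(abs_le.1 (h i)).1]
  rw [abs_le]
  constructor <;> linarith [(abs_le.1 (h i)).2]

lemma abs_ciInf_sub_ciInf_le [Nonempty ι] (hg : BddBelow (Set.range g))
    (h : ∀ i, |f i - g i| ≤ δ) : |(⨅ i, f i) - ⨅ i, g i| ≤ δ := by
  obtain ⟨L, hL⟩ := hg
  have hf : BddBelow (Set.range f) :=
    ⟨L - δ, by rintro _ ⟨i, rfl⟩; linarith [hL ⟨i, rfl⟩, (abs_le.1 (h i)).1]⟩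
  have hfg : (⨅ i, f i) - δ ≤ ⨅ i, g i :=
    le_ciInf fun i => by linarith [ciInf_le hf i, (abs_le.1 (h i)).2]
  have hgf : (⨅ i, g i) - δ ≤ ⨅ i, f i :=
    le_ciInf fun i => by linarith [ciInf_le ⟨L, hL⟩ i, (abs_le.1 (h i)).1]
  rw [abs_le]
  constructor <;> linarith

end Order

section Expectation

variable {J : ℕ} {P Q f f' : Fin J → ℝ} {B : ℝ}

lemma abs_expec_le (hQ : Q ∈ stdSimplex ℝ (Fin J)) (hf : ∀ j, |f j| ≤ B) :
    |expec Q f| ≤ B :=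
  calc |expec Q f| ≤ ∑ j, |Q j * f j| := Finset.abs_sum_le_sum_abs _ _
    _ ≤ ∑ j, Q j * B := by
        gcongr with j
        rw [abs_mul, abs_of_nonneg (hQ.1 j)]
        exact mul_le_mul_of_nonneg_left (hf j) (hQ.1 j)
    _ = B := by rw [← Finset.sum_mul, hQ.2, one_mul]

lemma expec_sub : expec Q (f - f') = expec Q f - expec Q f' := by
  simp only [expec, Pi.sub_apply, mul_sub, Finset.sum_sub_distrib]

lemma abs_expec_sub_expec_le (hf : ∀ j, |f j| ≤ B) :
    |expec Q f - expec P f| ≤ (∑ j, |Q j - P j|) * B := by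
  have hdiff : expec Q f - expec P f = ∑ j, (Q j - P j) * f j := by
    simp only [expec, sub_mul, Finset.sum_sub_distrib]
  calc |expec Q f - expec P f| ≤ ∑ j, |(Q j - P j) * f j| := by
        rw [hdiff]; exact Finset.abs_sum_le_sum_abs _ _
    _ ≤ ∑ j, |Q j - P j| * B := by
        gcongr with j
        rw [abs_mul]
        exact mul_le_mul_of_nonneg_left (hf j) (abs_nonneg _)
    _ = (∑ j, |Q j - P j|) * B := (Finset.sum_mul _ _ _).symm

lemma sum_abs_sub_le_of_mem_boxSet {r : Fin J → ℝ} (hQ : Q ∈ boxSet J P r) (P₀ : Fin J → ℝ) :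
    ∑ j, |Q j - P₀ j| ≤ ∑ j, |P j - P₀ j| + ∑ j, r j := by
  rw [← Finset.sum_add_distrib]
  gcongr with j
  have hQP : |Q j - P j| ≤ r j :=
    abs_sub_le_iff.2 ⟨by linarith [(hQ.2 j).2], by linarith [(hQ.2 j).1]⟩
  linarith [abs_sub_le (Q j) (P j) (P₀ j)]

end Expectation

section WeightedNorm

variable {m : ℕ} {S : Set (Fin m → ℝ)} {w V : (Fin m → ℝ) → ℝ}

lemma wSupNorm_nonneg (hw : ∀ s ∈ S, 0 ≤ w s) : 0 ≤ wSupNorm S w V :=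
  Real.iSup_nonneg fun s => div_nonneg (abs_nonneg _) (hw s s.2)

lemma wSupNorm_le {K : ℝ} (hw : ∀ s ∈ S, 0 < w s) (hK : 0 ≤ K)
    (h : ∀ s ∈ S, |V s| ≤ K * w s) : wSupNorm S w V ≤ K :=
  Real.iSup_le (fun s => (div_le_iff₀ (hw s s.2)).2 (h s s.2)) hK

lemma abs_le_wSupNorm_mul (hw : ∀ s ∈ S, 0 < w s) (hV : ∃ M, ∀ s ∈ S, |V s| ≤ M * w s) :
    ∀ s ∈ S, |V s| ≤ wSupNorm S w V * w s := by
  obtain ⟨M, hM⟩ := hV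
  have hbdd : BddAbove (Set.range fun s : S => |V s| / w s) :=
    ⟨M, by rintro _ ⟨s, rfl⟩; exact (div_le_iff₀ (hw s s.2)).2 (hM s s.2)⟩
  intro s hs
  exact (div_le_iff₀ (hw s hs)).1 (le_ciSup hbdd ⟨s, hs⟩)

lemma wSupNorm_le_div_of_abs_le {a b : ℝ} (hw : ∀ s ∈ S, 0 < w s) (ha : 0 ≤ a) (hb : 0 ≤ b)
    (hb1 : b < 1) (h : ∀ s ∈ S, |V s| ≤ (a + b * wSupNorm S w V) * w s) :
    wSupNorm S w V ≤ a / (1 - b) := by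
  have hN := wSupNorm_nonneg (V := V) fun s hs => (hw s hs).le
  have hself := wSupNorm_le hw (by positivity) h
  rw [le_div_iff₀ (by linarith)]
  linarith

end WeightedNorm

section Bellman

variable {J m n : ℕ} {A : Set (Fin n → ℝ)} {amb : Set (Fin J → ℝ)}
  {C : (Fin m → ℝ) → (Fin n → ℝ) → Fin J → ℝ} {g : (Fin m → ℝ) → (Fin n → ℝ) → Fin J → Fin m → ℝ}
  {γ : ℝ} {S : Set (Fin m → ℝ)} {w V V' : (Fin m → ℝ) → ℝ} {s : Fin m → ℝ} {a : Fin n → ℝ}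

def bellmanIntegrand (C : (Fin m → ℝ) → (Fin n → ℝ) → Fin J → ℝ)
    (g : (Fin m → ℝ) → (Fin n → ℝ) → Fin J → Fin m → ℝ) (γ : ℝ) (V : (Fin m → ℝ) → ℝ)
    (s : Fin m → ℝ) (a : Fin n → ℝ) : Fin J → ℝ :=
  fun j => C s a j + γ * V (g s a j)

lemma trueBellman_eq_robustBellman_singleton (P : Fin J → ℝ) :
    trueBellman A P C g γ V s = robustBellman A {P} C g γ V s := by
  simp only [trueBellman, robustBellman, ciSup_unique]
  rfl

lemma abs_bellmanIntegrand_le {Cbar κ K : ℝ} {j : Fin J} (hγ : 0 ≤ γ) (hK : 0 ≤ K)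
    (hV : ∀ t ∈ S, |V t| ≤ K * w t) (hgS : g s a j ∈ S) (hC : |C s a j| ≤ Cbar * w s)
    (hdrift : w (g s a j) ≤ κ * w s) :
    |bellmanIntegrand C g γ V s a j| ≤ (Cbar + γ * κ * K) * w s :=
  calc |C s a j + γ * V (g s a j)| ≤ |C s a j| + γ * |V (g s a j)| :=
        (abs_add_le _ _).trans_eq (by rw [abs_mul, abs_of_nonneg hγ])
    _ ≤ Cbar * w s + γ * (K * w (g s a j)) := by gcongr; exact hV _ hgS
    _ ≤ Cbar * w s + γ * (K * (κ * w s)) := by gcongr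
    _ = (Cbar + γ * κ * K) * w s := by ring

lemma abs_bellmanIntegrand_sub_le {κ K : ℝ} {j : Fin J} (hγ : 0 ≤ γ) (hK : 0 ≤ K)
    (hV : ∀ t ∈ S, |V t - V' t| ≤ K * w t) (hgS : g s a j ∈ S)
    (hdrift : w (g s a j) ≤ κ * w s) :
    |bellmanIntegrand C g γ V s a j - bellmanIntegrand C g γ V' s a j| ≤ γ * κ * K * w s :=
  calc |(C s a j + γ * V (g s a j)) - (C s a j + γ * V' (g s a j))|
        = γ * |V (g s a j) - V' (g s a j)| := by
          rw [add_sub_add_left_eq_sub, ← mul_sub, abs_mul, abs_of_nonneg hγ]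
    _ ≤ γ * (K * w (g s a j)) := by gcongr; exact hV _ hgS
    _ ≤ γ * (K * (κ * w s)) := by gcongr
    _ = γ * κ * K * w s := by ring

lemma abs_robustBellman_le {B : ℝ} (hA : A.Nonempty) (hamb : amb.Nonempty)
    (hΔ : amb ⊆ stdSimplex ℝ (Fin J)) (h : ∀ a ∈ A, ∀ j, |bellmanIntegrand C g γ V s a j| ≤ B) :
    |robustBellman A amb C g γ V s| ≤ B := by
  have := hA.to_subtype
  have := hamb.to_subtype
  have hsup (a : A) :
      |(⨆ Q : amb, expec (Q : Fin J → ℝ) (bellmanIntegrand C g γ V s a)) - 0| ≤ B :=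
    abs_ciSup_sub_le fun Q => by rw [sub_zero]; exact abs_expec_le (hΔ Q.2) (h a a.2)
  have hinf := abs_ciInf_sub_le hsup
  rwa [sub_zero] at hinf

lemma abs_robustBellman_sub_trueBellman_le {Pc : Fin J → ℝ} {B δ ε : ℝ} (hA : A.Nonempty)
    (hamb : amb.Nonempty) (hΔ : amb ⊆ stdSimplex ℝ (Fin J)) (hε : ∀ Q ∈ amb, ∑ j, |Q j - Pc j| ≤ ε)
    (hPc : Pc ∈ stdSimplex ℝ (Fin J)) (hB0 : 0 ≤ B)
    (hB : ∀ a ∈ A, ∀ j, |bellmanIntegrand C g γ V' s a j| ≤ B)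
    (hδ : ∀ a ∈ A, ∀ j,
      |bellmanIntegrand C g γ V s a j - bellmanIntegrand C g γ V' s a j| ≤ δ) :
    |robustBellman A amb C g γ V s - trueBellman A Pc C g γ V' s| ≤ δ + ε * B := by
  have := hA.to_subtype
  have := hamb.to_subtype
  have hpoint (a : A) (Q : amb) :
      |expec (Q : Fin J → ℝ) (bellmanIntegrand C g γ V s a)
        - expec Pc (bellmanIntegrand C g γ V' s a)| ≤ δ + ε * B :=
    calc _ ≤ |expec (Q : Fin J → ℝ) (bellmanIntegrand C g γ V s a)
              - expec Q (bellmanIntegrand C g γ V' s a)|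
            + |expec (Q : Fin J → ℝ) (bellmanIntegrand C g γ V' s a)
              - expec Pc (bellmanIntegrand C g γ V' s a)| := abs_sub_le _ _ _
      _ ≤ δ + (∑ j, |Q.1 j - Pc j|) * B := by
          rw [← expec_sub]
          exact add_le_add (abs_expec_le (hΔ Q.2) (hδ a a.2))
            (abs_expec_sub_expec_le (hB a a.2))
      _ ≤ δ + ε * B := by gcongr; exact hε Q Q.2
  have htrue (a : A) : |expec Pc (bellmanIntegrand C g γ V' s a) - 0| ≤ B := by
    rw [sub_zero]; exact abs_expec_le hPc (hB a a.2)
  exact abs_ciInf_sub_ciInf_le (bddBelow_range_of_abs_sub_le htrue)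
    fun a => abs_ciSup_sub_le (hpoint a)

lemma abs_le_of_eq_robustBellman {Cbar κ : ℝ} (hA : A.Nonempty) (hamb : amb.Nonempty)
    (hΔ : amb ⊆ stdSimplex ℝ (Fin J))
    (hgS : ∀ s ∈ S, ∀ a ∈ A, ∀ j, g s a j ∈ S) (hγ : 0 ≤ γ) (hw : ∀ s ∈ S, 0 < w s)
    (hCbar : 0 ≤ Cbar) (hκ : 0 ≤ κ) (hCb : ∀ s ∈ S, ∀ a ∈ A, ∀ j, |C s a j| ≤ Cbar * w s)
    (hdrift : ∀ s ∈ S, ∀ a ∈ A, ∀ j, w (g s a j) ≤ κ * w s) (hγκ : γ * κ < 1)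
    (hV : ∃ M, ∀ s ∈ S, |V s| ≤ M * w s) (hfix : ∀ s ∈ S, V s = robustBellman A amb C g γ V s) :
    ∀ s ∈ S, |V s| ≤ Cbar / (1 - γ * κ) * w s := by
  have hN := abs_le_wSupNorm_mul hw hV
  have hN0 : 0 ≤ wSupNorm S w V := wSupNorm_nonneg fun s hs => (hw s hs).le
  have hself : ∀ s ∈ S, |V s| ≤ (Cbar + γ * κ * wSupNorm S w V) * w s := fun s hs => by
    rw [hfix s hs]
    exact abs_robustBellman_le hA hamb hΔ fun a ha j =>
      abs_bellmanIntegrand_le hγ hN0 hN (hgS s hs a ha j) (hCb s hs a ha j) (hdrift s hs a ha j)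
  have hNle := wSupNorm_le_div_of_abs_le hw hCbar (mul_nonneg hγ hκ) hγκ hself
  exact fun s hs => (hN s hs).trans (by gcongr; exact (hw s hs).le)

end Bellman

theorem robust_value_deviation_bound_general
    (J m n : ℕ)
    (S : Set (Fin m → ℝ))
    (A : Set (Fin n → ℝ)) (hA : A.Nonempty)
    (C : (Fin m → ℝ) → (Fin n → ℝ) → Fin J → ℝ)
    (g : (Fin m → ℝ) → (Fin n → ℝ) → Fin J → Fin m → ℝ)
    (hgS : ∀ s ∈ S, ∀ a ∈ A, ∀ j, g s a j ∈ S)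
    (γ : ℝ) (hγ0 : 0 ≤ γ)
    (w : (Fin m → ℝ) → ℝ) (hw1 : ∀ s ∈ S, 1 ≤ w s)
    (Cbar κ : ℝ) (hCbar0 : 0 < Cbar) (hκ0 : 0 ≤ κ)
    (hCb : ∀ s ∈ S, ∀ a ∈ A, ∀ j, |C s a j| ≤ Cbar * w s)
    (hdrift : ∀ s ∈ S, ∀ a ∈ A, ∀ j, w (g s a j) ≤ κ * w s)
    (hγκ : γ * κ < 1)
    (Pc : Fin J → ℝ) (hPc : Pc ∈ stdSimplex ℝ (Fin J))
    (Phat rhat : Fin J → ℝ) (hrhat : ∀ j, 0 ≤ rhat j)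
    (hboxne : (boxSet J Phat rhat).Nonempty)
    (Vstar : (Fin m → ℝ) → ℝ) (hVstarBd : ∃ M, ∀ s ∈ S, |Vstar s| ≤ M * w s)
    (hVstarFix : ∀ s ∈ S, Vstar s = trueBellman A Pc C g γ Vstar s)
    (Vhat : (Fin m → ℝ) → ℝ) (hVhatBd : ∃ M, ∀ s ∈ S, |Vhat s| ≤ M * w s)
    (hVhatFix : ∀ s ∈ S, Vhat s = robustBellman A (boxSet J Phat rhat) C g γ Vhat s) :
    wSupNorm S w (fun s => Vhat s - Vstar s)
      ≤ Cbar / (1 - γ * κ) ^ 2 * ((∑ j, |Phat j - Pc j|) + 2 * ∑ j, rhat j) := by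
  have hw (s) (hs : s ∈ S) : 0 < w s := one_pos.trans_le (hw1 s hs)
  have hboxΔ : boxSet J Phat rhat ⊆ stdSimplex ℝ (Fin J) := fun Q hQ => hQ.1
  have hγκ0 : 0 ≤ γ * κ := mul_nonneg hγ0 hκ0
  have hD : 0 < 1 - γ * κ := by linarith
  set K := Cbar / (1 - γ * κ) with hKdef
  have hK : 0 ≤ K := div_nonneg hCbar0.le hD.le
  have hKfix : Cbar + γ * κ * K = K := by rw [hKdef]; field_simp; ring
  have hVstarK := abs_le_of_eq_robustBellman hA (Set.singleton_nonempty Pc)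
    (Set.singleton_subset_iff.2 hPc) hgS hγ0 hw hCbar0.le hκ0 hCb hdrift hγκ hVstarBd
    fun s hs => (hVstarFix s hs).trans (trueBellman_eq_robustBellman_singleton Pc)
  have hVhatK := abs_le_of_eq_robustBellman hA hboxne hboxΔ hgS hγ0 hw hCbar0.le hκ0 hCb hdrift
    hγκ hVhatBd hVhatFix
  set N := wSupNorm S w (fun s => Vhat s - Vstar s)
  have hN := abs_le_wSupNorm_mul hw ⟨K + K, fun s hs => by
    linarith [abs_sub (Vhat s) (Vstar s), hVhatK s hs, hVstarK s hs]⟩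
  have hN0 : 0 ≤ N := wSupNorm_nonneg fun s hs => (hw s hs).le
  set ε := ∑ j, |Phat j - Pc j| + ∑ j, rhat j
  have hr0 : 0 ≤ ∑ j, rhat j := Finset.sum_nonneg fun j _ => hrhat j
  have hε0 : 0 ≤ ε := add_nonneg (Finset.sum_nonneg fun j _ => abs_nonneg _) hr0
  have hstep (s) (hs : s ∈ S) : |Vhat s - Vstar s| ≤ γ * κ * N * w s + ε * (K * w s) := by
    rw [hVhatFix s hs, hVstarFix s hs]
    exact abs_robustBellman_sub_trueBellman_le hA hboxne hboxΔ
      (fun Q hQ => sum_abs_sub_le_of_mem_boxSet hQ Pc) hPc (by have := hw s hs; positivity)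
      (fun a ha j => (abs_bellmanIntegrand_le hγ0 hK hVstarK (hgS s hs a ha j)
        (hCb s hs a ha j) (hdrift s hs a ha j)).trans_eq (by rw [hKfix]))
      (fun a ha j => abs_bellmanIntegrand_sub_le hγ0 hN0 hN (hgS s hs a ha j) (hdrift s hs a ha j))
  calc N ≤ ε * K / (1 - γ * κ) :=
        wSupNorm_le_div_of_abs_le hw (by positivity) hγκ0 hγκ
          fun s hs => (hstep s hs).trans_eq (by ring)
    _ = Cbar / (1 - γ * κ) ^ 2 * ε := by rw [hKdef]; field_simp
    _ ≤ _ := by gcongr; linarith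

/-- deviation bound between the robust and true optimal value functions
in terms of the ℓ₁ estimation error of the center and the total radius. -/
theorem robust_value_deviation_bound
    (J m n : ℕ) (hJ : 2 ≤ J)
    (S : Set (Fin m → ℝ)) (hS : S.Nonempty) (hScl : IsClosed S)
    (A : Set (Fin n → ℝ)) (hA : A.Nonempty) (hAcp : IsCompact A)
    (C : (Fin m → ℝ) → (Fin n → ℝ) → Fin J → ℝ)
    (g : (Fin m → ℝ) → (Fin n → ℝ) → Fin J → Fin m → ℝ)
    (hCcont : ∀ j, ContinuousOn (fun p : (Fin m → ℝ) × (Fin n → ℝ) => C p.1 p.2 j) (S ×ˢ A))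
    (hgcont : ∀ j, ContinuousOn (fun p : (Fin m → ℝ) × (Fin n → ℝ) => g p.1 p.2 j) (S ×ˢ A))
    (hgS : ∀ s ∈ S, ∀ a ∈ A, ∀ j, g s a j ∈ S)
    (γ : ℝ) (hγ0 : 0 ≤ γ) (hγ1 : γ < 1)
    (w : (Fin m → ℝ) → ℝ) (hw1 : ∀ s ∈ S, 1 ≤ w s) (hwcont : ContinuousOn w S)
    (Cbar κ : ℝ) (hCbar0 : 0 < Cbar) (hκ0 : 0 ≤ κ)
    (hCb : ∀ s ∈ S, ∀ a ∈ A, ∀ j, |C s a j| ≤ Cbar * w s)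
    (hdrift : ∀ s ∈ S, ∀ a ∈ A, ∀ j, w (g s a j) ≤ κ * w s)
    (hγκ : γ * κ < 1)
    (Pc : Fin J → ℝ) (hPc : Pc ∈ stdSimplex ℝ (Fin J))
    (Phat rhat : Fin J → ℝ) (hPhat : Phat ∈ stdSimplex ℝ (Fin J)) (hrhat : ∀ j, 0 ≤ rhat j)
    (hboxne : (boxSet J Phat rhat).Nonempty)
    (Vstar : (Fin m → ℝ) → ℝ) (hVstarBd : ∃ M, ∀ s ∈ S, |Vstar s| ≤ M * w s)
    (hVstarFix : ∀ s ∈ S, Vstar s = trueBellman A Pc C g γ Vstar s)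
    (Vhat : (Fin m → ℝ) → ℝ) (hVhatBd : ∃ M, ∀ s ∈ S, |Vhat s| ≤ M * w s)
    (hVhatFix : ∀ s ∈ S, Vhat s = robustBellman A (boxSet J Phat rhat) C g γ Vhat s) :
    wSupNorm S w (fun s => Vhat s - Vstar s)
      ≤ Cbar / (1 - γ * κ) ^ 2 * ((∑ j, |Phat j - Pc j|) + 2 * ∑ j, rhat j) :=
  robust_value_deviation_bound_general J m n S A hA C g hgS γ hγ0 w hw1 Cbar κ hCbar0 hκ0 hCb hdrift
    hγκ Pc hPc Phat rhat hrhat hboxne Vstar hVstarBd hVstarFix Vhat hVhatBd hVhatFix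

end
end

section
/- Under the stochastic optimal control setup with weight function w, let 𝔓(P̂, r̂) be a nonempty box ambiguity set, V̂* the unique fixed point of the robust Bellman operator L̂, and π : S → A a policy such that V̂*(s) = sup_{Q∈𝔓(P̂,r̂)} E_Q[C(s,π(s),ξ) + γ V̂*(g(s,π(s),ξ))] for all s ∈ S. If the true distribution satisfies P^c ∈ 𝔓(P̂, r̂), then V̂*(s) ≥ V^π(s) for all s ∈ S, where V^π is the unique fixed point of the policy evaluation operator L^π under P^c. (This is the deterministic core of the finite-sample posterior credibility guarantee: on the event that P^c lies in the posterior credible ambiguity set, the robust value function upper bounds the true value of the robust policy.) -/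
open Filter Topology

noncomputable section

/-- deterministic core of the finite-sample posterior credibility
guarantee. If the true distribution lies in the ambiguity set, the robust value
function upper-bounds the true value of the robust policy. -/
theorem robust_value_dominates_policy_value
    (J m n : ℕ) (hJ : 2 ≤ J)
    (S : Set (Fin m → ℝ)) (hS : S.Nonempty) (hScl : IsClosed S)
    (A : Set (Fin n → ℝ)) (hA : A.Nonempty) (hAcp : IsCompact A)
    (C : (Fin m → ℝ) → (Fin n → ℝ) → Fin J → ℝ)
    (g : (Fin m → ℝ) → (Fin n → ℝ) → Fin J → Fin m → ℝ)
    (hCcont : ∀ j, ContinuousOn (fun p : (Fin m → ℝ) × (Fin n → ℝ) => C p.1 p.2 j) (S ×ˢ A))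
    (hgcont : ∀ j, ContinuousOn (fun p : (Fin m → ℝ) × (Fin n → ℝ) => g p.1 p.2 j) (S ×ˢ A))
    (hgS : ∀ s ∈ S, ∀ a ∈ A, ∀ j, g s a j ∈ S)
    (γ : ℝ) (hγ0 : 0 ≤ γ) (hγ1 : γ < 1)
    (w : (Fin m → ℝ) → ℝ) (hw1 : ∀ s ∈ S, 1 ≤ w s) (hwcont : ContinuousOn w S)
    (Cbar κ : ℝ) (hCbar0 : 0 < Cbar) (hκ0 : 0 ≤ κ)
    (hCb : ∀ s ∈ S, ∀ a ∈ A, ∀ j, |C s a j| ≤ Cbar * w s)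
    (hdrift : ∀ s ∈ S, ∀ a ∈ A, ∀ j, w (g s a j) ≤ κ * w s)
    (hγκ : γ * κ < 1)
    (Phat rhat : Fin J → ℝ) (hPhat : Phat ∈ stdSimplex ℝ (Fin J)) (hrhat : ∀ j, 0 ≤ rhat j)
    (hboxne : (boxSet J Phat rhat).Nonempty)
    (Vhat : (Fin m → ℝ) → ℝ) (hVhatBd : ∃ M, ∀ s ∈ S, |Vhat s| ≤ M * w s)
    (hVhatFix : ∀ s ∈ S, Vhat s = robustBellman A (boxSet J Phat rhat) C g γ Vhat s)
    (π : (Fin m → ℝ) → (Fin n → ℝ)) (hπ : ∀ s ∈ S, π s ∈ A)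
    (hπopt : ∀ s ∈ S,
      Vhat s = ⨆ Q : boxSet J Phat rhat,
        expec (Q : Fin J → ℝ) (fun j => C s (π s) j + γ * Vhat (g s (π s) j)))
    (Pc : Fin J → ℝ) (hPcmem : Pc ∈ boxSet J Phat rhat)
    (Vpi : (Fin m → ℝ) → ℝ) (hVpiBd : ∃ M, ∀ s ∈ S, |Vpi s| ≤ M * w s)
    (hVpiFix : ∀ s ∈ S, Vpi s = policyBellman Pc C g π γ Vpi s) :
    ∀ s ∈ S, Vpi s ≤ Vhat s := by
  obtain ⟨M1, hM1⟩ := hVhatBd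
  obtain ⟨M2, hM2⟩ := hVpiBd
  set M := max (M1 + M2) 0 with hMdef
  have hM0 : 0 ≤ M := le_max_right _ _
  have hPc0 : ∀ j, 0 ≤ Pc j := fun j => hPcmem.1.1 j
  have hPc1 : ∑ j, Pc j = 1 := hPcmem.1.2
  have hw0 : ∀ s ∈ S, 0 < w s := fun s hs => lt_of_lt_of_le one_pos (hw1 s hs)
  -- base bound
  have hbase : ∀ s ∈ S, Vpi s - Vhat s ≤ M * w s := by
    intro s hs
    have h1 := abs_le.1 (hM1 s hs)
    have h2 := abs_le.1 (hM2 s hs)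
    have hMge : M1 + M2 ≤ M := le_max_left _ _
    nlinarith [(hw0 s hs).le, hw1 s hs]
  -- key one-step inequality
  have key : ∀ s ∈ S, Vpi s - Vhat s ≤
      γ * ∑ j, Pc j * (Vpi (g s (π s) j) - Vhat (g s (π s) j)) := by
    intro s hs
    have hVhatge : expec Pc (fun j => C s (π s) j + γ * Vhat (g s (π s) j)) ≤ Vhat s := by
      rw [hπopt s hs]
      have hbdd : BddAbove (Set.range fun Q : boxSet J Phat rhat =>
          expec (Q : Fin J → ℝ) (fun j => C s (π s) j + γ * Vhat (g s (π s) j))) := by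
        refine ⟨∑ j, |C s (π s) j + γ * Vhat (g s (π s) j)|, ?_⟩
        rintro x ⟨Q, rfl⟩
        have hQ0 : ∀ j, 0 ≤ (Q : Fin J → ℝ) j := fun j => Q.2.1.1 j
        have hQ1 : ∀ j, (Q : Fin J → ℝ) j ≤ 1 := by
          intro j
          have hsum : ∑ i, (Q : Fin J → ℝ) i = 1 := Q.2.1.2
          have := Finset.single_le_sum (fun i _ => hQ0 i) (Finset.mem_univ j)
          linarith
        apply Finset.sum_le_sum
        intro j _
        show (Q : Fin J → ℝ) j * (C s (π s) j + γ * Vhat (g s (π s) j)) ≤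
          |C s (π s) j + γ * Vhat (g s (π s) j)|
        have habs : C s (π s) j + γ * Vhat (g s (π s) j) ≤
            |C s (π s) j + γ * Vhat (g s (π s) j)| := le_abs_self _
        have habs0 : (0:ℝ) ≤ |C s (π s) j + γ * Vhat (g s (π s) j)| := abs_nonneg _
        nlinarith [hQ0 j, hQ1 j]
      exact le_ciSup hbdd (⟨Pc, hPcmem⟩ : boxSet J Phat rhat)
    have hVpieq := hVpiFix s hs
    have hdiff : expec Pc (fun j => C s (π s) j + γ * Vpi (g s (π s) j)) -
        expec Pc (fun j => C s (π s) j + γ * Vhat (g s (π s) j)) =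
        γ * ∑ j, Pc j * (Vpi (g s (π s) j) - Vhat (g s (π s) j)) := by
      simp only [expec]
      rw [← Finset.sum_sub_distrib, Finset.mul_sum]
      exact Finset.sum_congr rfl fun j _ => by ring
    have : Vpi s = expec Pc (fun j => C s (π s) j + γ * Vpi (g s (π s) j)) := hVpieq
    linarith
  -- iterated bound
  have hiter : ∀ N : ℕ, ∀ s ∈ S, Vpi s - Vhat s ≤ (γ * κ) ^ N * M * w s := by
    intro N
    induction N with
    | zero => simpa using hbase
    | succ N ih =>
      intro s hs
      have hkey := key s hs
      have hsum : ∑ j, Pc j * (Vpi (g s (π s) j) - Vhat (g s (π s) j)) ≤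
          ∑ j, Pc j * ((γ * κ) ^ N * M * (κ * w s)) := by
        apply Finset.sum_le_sum
        intro j _
        apply mul_le_mul_of_nonneg_left _ (hPc0 j)
        have hgmem := hgS s hs (π s) (hπ s hs) j
        calc Vpi (g s (π s) j) - Vhat (g s (π s) j)
            ≤ (γ * κ) ^ N * M * w (g s (π s) j) := ih (g s (π s) j) hgmem
          _ ≤ (γ * κ) ^ N * M * (κ * w s) := by
              apply mul_le_mul_of_nonneg_left (hdrift s hs (π s) (hπ s hs) j)
              positivity
      have hconst : ∑ j, Pc j * ((γ * κ) ^ N * M * (κ * w s)) =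
          (γ * κ) ^ N * M * (κ * w s) := by
        rw [← Finset.sum_mul, hPc1, one_mul]
      calc Vpi s - Vhat s ≤ γ * ∑ j, Pc j * (Vpi (g s (π s) j) - Vhat (g s (π s) j)) := hkey
        _ ≤ γ * ((γ * κ) ^ N * M * (κ * w s)) := by
            rw [← hconst]
            exact mul_le_mul_of_nonneg_left hsum hγ0
        _ = (γ * κ) ^ (N + 1) * M * w s := by ring
  intro s hs
  have ht : Tendsto (fun N : ℕ => (γ * κ) ^ N * M * w s) atTop (𝓝 0) := by
    have h0 := tendsto_pow_atTop_nhds_zero_of_lt_one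
      (mul_nonneg hγ0 hκ0)
      (lt_of_le_of_lt (le_abs_self _) (by rwa [abs_of_nonneg (mul_nonneg hγ0 hκ0)]))
    simpa using (h0.mul_const M).mul_const (w s)
  have hle : Vpi s - Vhat s ≤ 0 := ge_of_tendsto' ht fun N => hiter N s hs
  linarith

end
end
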